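/- arXiv:2511.22964 — 2 statements merged into one kernel-verified Lean document; each statement's English description precedes it below -/
import Mathlib

section
/- For all nonnegative integers i, j and every z ∈ ℂ, the mixed Wirtinger derivative of the Gaussian satisfies ∂^i ∂̄^j e^{-|z|²} = (Σ_{n=0}^{i} (-1)^{n+j} C(i,n) (j!/(j−i+n)!) z^{j−i+n} z̄^n) e^{-|z|²}, where terms with j < i − n are omitted (interpreted as zero). -/
open MeasureTheory Complex Finset

noncomputable section

/-- Wirtinger derivative ∂ = (1/2)(∂/∂x − i ∂/∂y). -/
def dz (f : ℂ → ℂ) : ℂ → ℂ := fun z =>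
  (1/2 : ℂ) * (fderiv ℝ f z 1 - Complex.I * fderiv ℝ f z Complex.I)

/-- Wirtinger derivative ∂̄ = (1/2)(∂/∂x + i ∂/∂y). -/
def dzbar (f : ℂ → ℂ) : ℂ → ℂ := fun z =>
  (1/2 : ℂ) * (fderiv ℝ f z 1 + Complex.I * fderiv ℝ f z Complex.I)

/-- Weighted inner product ⟨f,g⟩_φ = ∫ conj f · g · e^{-φ}. -/
def wip (φ : ℂ → ℝ) (f g : ℂ → ℂ) : ℂ :=
  ∫ z : ℂ, (starRingEnd ℂ) (f z) * g z * (Real.exp (-(φ z)) : ℂ)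

/-- Weighted squared L² norm ‖f‖²_φ. -/
def wnorm (φ : ℂ → ℝ) (f : ℂ → ℂ) : ℝ :=
  ∫ z : ℂ, ‖f z‖ ^ 2 * Real.exp (-(φ z))

/-- Formal adjoint of ∂̄^k : ψ ↦ (−1)^k e^{φ} ∂^k(ψ e^{-φ}). -/
def dbarStar (k : ℕ) (φ : ℂ → ℝ) (ψ : ℂ → ℂ) : ℂ → ℂ := fun z =>
  (-1 : ℂ) ^ k * (Real.exp (φ z) : ℂ) *
    dz^[k] (fun w => ψ w * (Real.exp (-(φ w)) : ℂ)) z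

/-- Formal adjoint of ∂^k : ψ ↦ (−1)^k e^{φ} ∂̄^k(ψ e^{-φ}). -/
def dStar (k : ℕ) (φ : ℂ → ℝ) (ψ : ℂ → ℂ) : ℂ → ℂ := fun z =>
  (-1 : ℂ) ^ k * (Real.exp (φ z) : ℂ) *
    dzbar^[k] (fun w => ψ w * (Real.exp (-(φ w)) : ℂ)) z

/-- R = ∂^k ∂̄^k. -/
def Rop (k : ℕ) (ψ : ℂ → ℂ) : ℂ → ℂ := dz^[k] (dzbar^[k] ψ)

/-- Formal adjoint of R : ψ ↦ e^{φ} ∂^k ∂̄^k(ψ e^{-φ}). -/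
def RStar (k : ℕ) (φ : ℂ → ℝ) (ψ : ℂ → ℂ) : ℂ → ℂ := fun z =>
  (Real.exp (φ z) : ℂ) *
    dz^[k] (dzbar^[k] (fun w => ψ w * (Real.exp (-(φ w)) : ℂ))) z


/-! The real derivative of `G a b := z^a z̄^b e^{-|z|²}` is `v ↦ p v + q v̄` with
`p = a G(a-1, b) - G(a, b+1)` and `q = b G(a, b-1) - G(a+1, b)`, and these coefficients are
exactly `∂ G a b` and `∂̄ G a b`. Hence `∂̄^j G 0 0 = (-1)^j G j 0`, while `∂` sends the term
`(-1)^n a(a-1)⋯(a-k+1) G(a-k, b+n)` to the sum of the terms indexed by `(n, k+1)` and `(n+1, k)`;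
so `∂^i G a b` is the sum of the terms `(n, i-n)` weighted by Pascal's binomial coefficients. -/

def HasWirtingerDerivAt (f : ℂ → ℂ) (p q z : ℂ) : Prop :=
  HasFDerivAt f (p • ContinuousLinearMap.id ℝ ℂ + q • (conjCLE : ℂ →L[ℝ] ℂ)) z

namespace HasWirtingerDerivAt

variable {f g : ℂ → ℂ} {p q p' q' z : ℂ}

theorem fderiv_apply (h : HasWirtingerDerivAt f p q z) (v : ℂ) :
    fderiv ℝ f z v = p * v + q * starRingEnd ℂ v := by
  simp [h.fderiv]

theorem dz_eq (h : HasWirtingerDerivAt f p q z) : dz f z = p := by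
  rw [dz, h.fderiv_apply, h.fderiv_apply, map_one, conj_I]
  linear_combination (q - p) / 2 * I_sq

theorem dzbar_eq (h : HasWirtingerDerivAt f p q z) : dzbar f z = q := by
  rw [dzbar, h.fderiv_apply, h.fderiv_apply, map_one, conj_I]
  linear_combination (p - q) / 2 * I_sq

theorem const_mul (h : HasWirtingerDerivAt f p q z) (c : ℂ) :
    HasWirtingerDerivAt (fun w => c * f w) (c * p) (c * q) z :=
  (HasFDerivAt.const_mul h c).congr_fderiv <| by ext v; simp; ring

theorem mul (hf : HasWirtingerDerivAt f p q z) (hg : HasWirtingerDerivAt g p' q' z) :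
    HasWirtingerDerivAt (fun w => f w * g w) (f z * p' + g z * p) (f z * q' + g z * q) z :=
  (HasFDerivAt.mul hf hg).congr_fderiv <| by ext v; simp; ring

theorem sum {ι : Type*} {s : Finset ι} {f : ι → ℂ → ℂ} {p q : ι → ℂ}
    (h : ∀ n ∈ s, HasWirtingerDerivAt (f n) (p n) (q n) z) :
    HasWirtingerDerivAt (fun w => ∑ n ∈ s, f n w) (∑ n ∈ s, p n) (∑ n ∈ s, q n) z :=
  (HasFDerivAt.fun_sum h).congr_fderiv <| by
    ext v; simp [Finset.sum_add_distrib, Finset.sum_mul]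

end HasWirtingerDerivAt

theorem HasDerivAt.hasWirtingerDerivAt {f : ℂ → ℂ} {p z : ℂ} (h : HasDerivAt f p z) :
    HasWirtingerDerivAt f p 0 z :=
  (h.hasFDerivAt.restrictScalars ℝ).congr_fderiv <| by ext v; simp [mul_comm]

theorem HasDerivAt.comp_hasWirtingerDerivAt {f g : ℂ → ℂ} {g' p q z : ℂ}
    (hg : HasDerivAt g g' (f z)) (hf : HasWirtingerDerivAt f p q z) :
    HasWirtingerDerivAt (g ∘ f) (g' * p) (g' * q) z :=
  ((hg.hasFDerivAt.restrictScalars ℝ).comp z hf).congr_fderiv <| by ext v; simp; ring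

theorem hasWirtingerDerivAt_conj (z : ℂ) : HasWirtingerDerivAt (starRingEnd ℂ) 0 1 z :=
  (conjCLE : ℂ →L[ℝ] ℂ).hasFDerivAt.congr_fderiv <| by simp

def monomialGauss (a b : ℕ) (w : ℂ) : ℂ :=
  w ^ a * starRingEnd ℂ w ^ b * exp (-(normSq w : ℂ))

theorem hasWirtingerDerivAt_monomialGauss (a b : ℕ) (z : ℂ) :
    HasWirtingerDerivAt (monomialGauss a b)
      (a * monomialGauss (a - 1) b z - monomialGauss a (b + 1) z)
      (b * monomialGauss a (b - 1) z - monomialGauss (a + 1) b z) z := by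
  have hgauss : HasWirtingerDerivAt (fun w => exp (-(normSq w : ℂ)))
      (-starRingEnd ℂ z * exp (-(normSq z : ℂ))) (-z * exp (-(normSq z : ℂ))) z := by
    have h := ((hasDerivAt_id _).neg.cexp).comp_hasWirtingerDerivAt
      ((hasDerivAt_id z).hasWirtingerDerivAt.mul (hasWirtingerDerivAt_conj z))
    simp only [Function.comp_def, id, Pi.neg_apply, mul_conj] at h
    convert h using 1 <;> ring
  have := (((hasDerivAt_pow a z).hasWirtingerDerivAt.mul
    ((hasDerivAt_pow b _).comp_hasWirtingerDerivAt (hasWirtingerDerivAt_conj z))).mul hgauss)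
  unfold monomialGauss
  convert this using 1 <;> simp only [Function.comp_apply] <;> ring

theorem dzbar_iterate_gaussian (j : ℕ) :
    dzbar^[j] (monomialGauss 0 0) = fun w => (-1) ^ j * monomialGauss j 0 w := by
  induction j with
  | zero => funext w; simp
  | succ j ih =>
    rw [Function.iterate_succ_apply', ih]
    funext z
    rw [((hasWirtingerDerivAt_monomialGauss j 0 z).const_mul _).dzbar_eq]
    simp only [CharP.cast_eq_zero, zero_mul, zero_sub, pow_succ]
    ring

/-- The truncated `a - k` is harmless: `a.descFactorial k = 0` once `k > a`. -/
def gaussTerm (c : ℂ) (a b n k : ℕ) (w : ℂ) : ℂ :=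
  c * (-1) ^ n * a.descFactorial k * monomialGauss (a - k) (b + n) w

theorem hasWirtingerDerivAt_gaussTerm (c : ℂ) (a b n k : ℕ) (z : ℂ) :
    HasWirtingerDerivAt (gaussTerm c a b n k)
      (gaussTerm c a b n (k + 1) z + gaussTerm c a b (n + 1) k z)
      (c * (-1) ^ n * a.descFactorial k *
        ((b + n : ℕ) * monomialGauss (a - k) (b + n - 1) z - monomialGauss (a - k + 1) (b + n) z))
      z := by
  convert (hasWirtingerDerivAt_monomialGauss (a - k) (b + n) z).const_mul
    (c * (-1) ^ n * a.descFactorial k) using 1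
  · rfl
  · simp only [gaussTerm, Nat.descFactorial_succ, Nat.sub_sub, Nat.cast_mul, ← add_assoc]
    ring

theorem dz_iterate_const_mul_monomialGauss (c : ℂ) (a b i : ℕ) :
    dz^[i] (fun w => c * monomialGauss a b w) =
      fun w => ∑ n ∈ range (i + 1), (i.choose n : ℂ) * gaussTerm c a b n (i - n) w := by
  induction i with
  | zero => funext w; simp [gaussTerm]
  | succ i ih =>
    rw [Function.iterate_succ_apply', ih]
    funext z
    have hsum := HasWirtingerDerivAt.sum fun n (_ : n ∈ range (i + 1)) =>
      (hasWirtingerDerivAt_gaussTerm c a b n (i - n) z).const_mul (i.choose n : ℂ)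
    rw [hsum.dz_eq, sum_choose_succ_mul (fun n k => gaussTerm c a b n k z)]
    simp only [mul_add, sum_add_distrib]
    congr 1
    refine sum_congr rfl fun n hn => ?_
    rw [show i + 1 - n = i - n + 1 by have := mem_range_succ_iff.mp hn; omega]

theorem mixed_wirtinger_gauss (i j : ℕ) (z : ℂ) :
    dz^[i] (dzbar^[j] (fun w => Complex.exp (-(Complex.normSq w : ℂ)))) z
      = (∑ n ∈ Finset.range (i + 1),
          if j + n < i then 0 else
            (-1 : ℂ) ^ (n + j) * (i.choose n : ℂ) *
              ((j.factorial : ℂ) / ((j + n - i).factorial : ℂ)) *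
              z ^ (j + n - i) * (starRingEnd ℂ z) ^ n) *
        Complex.exp (-(Complex.normSq z : ℂ)) := by
  have hgauss : (fun w => exp (-(normSq w : ℂ))) = monomialGauss 0 0 := by
    funext w; simp [monomialGauss]
  rw [hgauss, dzbar_iterate_gaussian, dz_iterate_const_mul_monomialGauss, sum_mul]
  refine sum_congr rfl fun n hn => ?_
  have hni : n ≤ i := mem_range_succ_iff.mp hn
  simp only [gaussTerm, monomialGauss, zero_add]
  split_ifs with h
  · rw [Nat.descFactorial_eq_zero_iff_lt.mpr (by omega)]
    simp
  · rw [Nat.descFactorial_eq_div (by omega),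
      Nat.cast_div (Nat.factorial_dvd_factorial (Nat.sub_le _ _))
        (by exact_mod_cast (Nat.factorial_pos _).ne'),
      show j - (i - n) = j + n - i by omega]
    ring

end
end

section
/- Let φ : ℂ → [0,∞) be smooth, and for φ-weighted L² define the formal adjoints ∂̄*_φ ψ = (-1)^k e^{φ} ∂^k(ψ e^{-φ}) and ∂*_φ ψ = (-1)^k e^{φ} ∂̄^k(ψ e^{-φ}) for ψ ∈ C_0^∞(ℂ). If φ(z) = |z|², then for every ψ ∈ C_0^∞(ℂ), ⟨ψ, ∂̄^k(∂*_φ ψ) − ∂*_φ(∂̄^k ψ)⟩_φ = 0, where ⟨f,g⟩_φ = ∫_ℂ f̄ g e^{-φ} dσ. -/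
open MeasureTheory Complex Finset

noncomputable section

namespace Aux

lemma contDiff_dzbar {f : ℂ → ℂ} (hf : ContDiff ℝ (⊤ : ℕ∞) f) : ContDiff ℝ (⊤ : ℕ∞) (dzbar f) := by
  have h1 : ContDiff ℝ (⊤ : ℕ∞) (fderiv ℝ f) := hf.fderiv_right (by simp)
  exact contDiff_const.mul
    ((h1.clm_apply contDiff_const).add (contDiff_const.mul (h1.clm_apply contDiff_const)))

lemma contDiff_dzbar_iter {f : ℂ → ℂ} (hf : ContDiff ℝ (⊤ : ℕ∞) f) (k : ℕ) :
    ContDiff ℝ (⊤ : ℕ∞) (dzbar^[k] f) := by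
  induction k with
  | zero => simpa using hf
  | succ n ih => rw [Function.iterate_succ_apply']; exact contDiff_dzbar ih

lemma dzbar_mul {f g : ℂ → ℂ} {z : ℂ} (hf : DifferentiableAt ℝ f z) (hg : DifferentiableAt ℝ g z) :
    dzbar (fun w => f w * g w) z = dzbar f z * g z + f z * dzbar g z := by
  simp only [dzbar, fderiv_fun_mul hf hg, ContinuousLinearMap.add_apply, ContinuousLinearMap.smul_apply,
    smul_eq_mul]
  ring

lemma dzbar_id (z : ℂ) : dzbar (fun w : ℂ => w) z = 0 := by
  simp [dzbar, fderiv_id']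

lemma dzbar_z_mul {f : ℂ → ℂ} {z : ℂ} (hf : DifferentiableAt ℝ f z) :
    dzbar (fun w => w * f w) z = z * dzbar f z := by
  rw [dzbar_mul differentiableAt_fun_id hf, dzbar_id]; ring

lemma dzbar_const_mul (c : ℂ) {f : ℂ → ℂ} {z : ℂ} (hf : DifferentiableAt ℝ f z) :
    dzbar (fun w => c * f w) z = c * dzbar f z := by
  simp only [dzbar, fderiv_const_mul hf c, ContinuousLinearMap.smul_apply, smul_eq_mul]
  ring

/-- The twisted operator A = ∂̄ − z. -/
def A (f : ℂ → ℂ) : ℂ → ℂ := fun z => dzbar f z - z * f z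

lemma contDiff_A {f : ℂ → ℂ} (hf : ContDiff ℝ (⊤ : ℕ∞) f) : ContDiff ℝ (⊤ : ℕ∞) (A f) :=
  (contDiff_dzbar hf).sub (contDiff_id.mul hf)

lemma contDiff_A_iter {f : ℂ → ℂ} (hf : ContDiff ℝ (⊤ : ℕ∞) f) (k : ℕ) :
    ContDiff ℝ (⊤ : ℕ∞) (A^[k] f) := by
  induction k with
  | zero => simpa using hf
  | succ n ih => rw [Function.iterate_succ_apply']; exact contDiff_A ih

def E : ℂ → ℂ := fun z => Complex.exp (-(z * (starRingEnd ℂ) z))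

lemma E_eq : E = fun z => (Real.exp (-(Complex.normSq z)) : ℂ) := by
  funext z
  rw [E, Complex.ofReal_exp, Complex.ofReal_neg, Complex.mul_conj]

lemma hasFDerivAt_E (z : ℂ) :
    HasFDerivAt E (E z • (-(z • Complex.conjCLE.toContinuousLinearMap
      + (starRingEnd ℂ) z • (ContinuousLinearMap.id ℝ ℂ)))) z := by
  have hc : HasFDerivAt (fun w : ℂ => (starRingEnd ℂ) w)
      (Complex.conjCLE.toContinuousLinearMap) z :=
    Complex.conjCLE.toContinuousLinearMap.hasFDerivAt
  have hm : HasFDerivAt (fun w : ℂ => w * (starRingEnd ℂ) w)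
      (z • Complex.conjCLE.toContinuousLinearMap + (starRingEnd ℂ) z • (ContinuousLinearMap.id ℝ ℂ)) z := by
    exact (hasFDerivAt_id z).mul hc
  unfold E
  simpa using hm.neg.cexp

lemma E_contDiff : ContDiff ℝ (⊤ : ℕ∞) E :=
  Complex.contDiff_exp.comp ((contDiff_id.mul (Complex.conjCLE.toContinuousLinearMap.contDiff)).neg)

lemma dzbar_E (z : ℂ) : dzbar E z = -z * E z := by
  rw [dzbar, (hasFDerivAt_E z).fderiv]
  simp [Complex.conjCLE_apply, smul_eq_mul]
  ring_nf
  simp [Complex.I_sq]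
  ring

lemma E_ne_zero (z : ℂ) : E z ≠ 0 := Complex.exp_ne_zero _

/-- Key conjugation identity: ∂̄^k (ψ E) = (A^k ψ) · E. -/
lemma dzbar_iter_mul_E {ψ : ℂ → ℂ} (hψ : ContDiff ℝ (⊤ : ℕ∞) ψ) (k : ℕ) :
    dzbar^[k] (fun w => ψ w * E w) = fun w => A^[k] ψ w * E w := by
  induction k with
  | zero => simp
  | succ n ih =>
    rw [Function.iterate_succ_apply', ih, Function.iterate_succ_apply']
    funext z
    have hA : ContDiff ℝ (⊤ : ℕ∞) (A^[n] ψ) := contDiff_A_iter hψ n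
    rw [dzbar_mul (hA.differentiable (by simp) z) (E_contDiff.differentiable (by simp) z), dzbar_E]
    show _ = (dzbar (A^[n] ψ) z - z * A^[n] ψ z) * E z
    ring

lemma dzbar_sub {f g : ℂ → ℂ} {z : ℂ} (hf : DifferentiableAt ℝ f z)
    (hg : DifferentiableAt ℝ g z) :
    dzbar (fun w => f w - g w) z = dzbar f z - dzbar g z := by
  simp only [dzbar]
  rw [fderiv_fun_sub hf hg]
  simp only [ContinuousLinearMap.sub_apply]
  ring

/-- Commutation: ∂̄ ∘ A = A ∘ ∂̄ on smooth functions. -/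
lemma dzbar_A_comm {f : ℂ → ℂ} (hf : ContDiff ℝ (⊤ : ℕ∞) f) :
    dzbar (A f) = A (dzbar f) := by
  funext z
  have hd1 : DifferentiableAt ℝ (dzbar f) z := (contDiff_dzbar hf).differentiable (by simp) z
  have hd2 : DifferentiableAt ℝ (fun w : ℂ => w * f w) z :=
    (contDiff_id.mul hf).differentiable (by simp) z
  have h1 : dzbar (A f) z = dzbar (fun w => dzbar f w - w * f w) z := rfl
  rw [h1, dzbar_sub hd1 hd2, dzbar_z_mul (hf.differentiable (by simp) z)]
  show _ = dzbar (dzbar f) z - z * dzbar f z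
  ring

lemma dzbar_A_iter_comm {f : ℂ → ℂ} (hf : ContDiff ℝ (⊤ : ℕ∞) f) (m : ℕ) :
    dzbar (A^[m] f) = A^[m] (dzbar f) := by
  induction m generalizing f with
  | zero => simp
  | succ p ih =>
    rw [Function.iterate_succ_apply, Function.iterate_succ_apply,
      ih (contDiff_A hf), dzbar_A_comm hf]

lemma dzbar_iter_A_iter_comm {f : ℂ → ℂ} (hf : ContDiff ℝ (⊤ : ℕ∞) f) (k m : ℕ) :
    dzbar^[k] (A^[m] f) = A^[m] (dzbar^[k] f) := by
  induction k generalizing f with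
  | zero => simp
  | succ n ih =>
    rw [Function.iterate_succ_apply, Function.iterate_succ_apply,
      dzbar_A_iter_comm hf m, ih (contDiff_dzbar hf)]

lemma exp_mul_exp_neg (a : ℝ) : ((Real.exp a : ℝ) : ℂ) * ((Real.exp (-a) : ℝ) : ℂ) = 1 := by
  rw [← Complex.ofReal_mul, ← Real.exp_add]
  simp

/-- dStar with Gaussian weight equals (−1)^k A^k. -/
lemma dStar_eq {ψ : ℂ → ℂ} (hψ : ContDiff ℝ (⊤ : ℕ∞) ψ) (k : ℕ) :
    dStar k (fun z => Complex.normSq z) ψ = fun z => (-1 : ℂ) ^ k * A^[k] ψ z := by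
  funext z
  have h1 : (fun w => ψ w * (Real.exp (-(Complex.normSq w)) : ℂ)) = fun w => ψ w * E w := by
    rw [E_eq]
  rw [dStar, h1, dzbar_iter_mul_E hψ k]
  show (-1 : ℂ) ^ k * (Real.exp (Complex.normSq z) : ℂ) * (A^[k] ψ z * E z) = _
  have hEz : E z = (Real.exp (-(Complex.normSq z)) : ℂ) := by rw [E_eq]
  rw [hEz]
  rw [mul_comm ((A^[k] ψ) z) _, ← mul_assoc, mul_assoc ((-1:ℂ)^k) _ _, exp_mul_exp_neg]
  ring

lemma dzbar_iter_const_mul (c : ℂ) {f : ℂ → ℂ} (hf : ContDiff ℝ (⊤ : ℕ∞) f) (k : ℕ) :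
    dzbar^[k] (fun w => c * f w) = fun w => c * dzbar^[k] f w := by
  induction k with
  | zero => simp
  | succ n ih =>
    rw [Function.iterate_succ_apply', ih, Function.iterate_succ_apply']
    funext z
    exact dzbar_const_mul c ((contDiff_dzbar_iter hf n).differentiable (by simp) z)

/-- The main pointwise identity. -/
lemma pointwise_comm {ψ : ℂ → ℂ} (hψ : ContDiff ℝ (⊤ : ℕ∞) ψ) (k : ℕ) (z : ℂ) :
    dzbar^[k] (dStar k (fun z => Complex.normSq z) ψ) z
      = dStar k (fun z => Complex.normSq z) (dzbar^[k] ψ) z := by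
  rw [dStar_eq hψ k, dStar_eq (contDiff_dzbar_iter hψ k) k,
    dzbar_iter_const_mul _ (contDiff_A_iter hψ k) k]
  simp only
  rw [dzbar_iter_A_iter_comm hψ k k]

end Aux

theorem comm_dzbar_dStar_vanishes (k : ℕ) (hk : 1 ≤ k) (ψ : ℂ → ℂ)
    (hψ : ContDiff ℝ (⊤ : ℕ∞) ψ) (hψc : HasCompactSupport ψ) :
    wip (fun z => Complex.normSq z) ψ
      (fun z => dzbar^[k] (dStar k (fun z => Complex.normSq z) ψ) z - dStar k (fun z => Complex.normSq z) (dzbar^[k] ψ) z) = 0 := by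
  have h : ∀ z : ℂ, dzbar^[k] (dStar k (fun z => Complex.normSq z) ψ) z
      - dStar k (fun z => Complex.normSq z) (dzbar^[k] ψ) z = 0 := fun z => by
    rw [Aux.pointwise_comm hψ k z, sub_self]
  simp only [wip, h, mul_zero, zero_mul, integral_zero]

end
end
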